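/- Let H be a Hopf algebra, A an H-module algebra, and F ∈ H⊗H a counital 2-cocycle with F⁻¹ = f'⊗f'' (summation understood). Then the map A_F # H^F → A # H sending a#h to (f' ▷ a)#(f''h) is an isomorphism of algebras. -/

import Mathlib

/-!
Let `φ` be the action of `F⁻¹` on `A ⊗ H`, by `▷` on `A` and by left multiplication on `H`.
Since `x ↦ (x acting legwise)` is an algebra map `H ⊗ H → End (A ⊗ H)`, `φ` is invertible with
inverse the action of `F`, and `(ε ⊗ id)(F⁻¹) = 1` gives `φ (1 # 1) = 1 # 1`.
For multiplicativity, both `φ ((a # h) ·_F (b # g))` and `φ (a # h) · φ (b # g)` are values of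
`(u ⊗ v) ⊗ w ↦ (u ▷ a)(v ▷ b) # w g` on `H ⊗ H ⊗ H`, namely at
`(Δ ⊗ id)(F⁻¹) (F⁻¹ ⊗ 1) (1 ⊗ F Δ(h) F⁻¹)` and at `(id ⊗ Δ)(F⁻¹) (1 ⊗ Δ(h) F⁻¹)`.
These agree by the cocycle identity for `F⁻¹`,
`(Δ ⊗ id)(F⁻¹) (F⁻¹ ⊗ 1) = (id ⊗ Δ)(F⁻¹) (1 ⊗ F⁻¹)`.
-/

open TensorProduct LinearMap

noncomputable section

variable (k : Type) [Field k]
variable (H : Type) [Ring H] [HopfAlgebra k H]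

/-- `F`, with inverse `Finv`, is a counital 2-cocycle on the Hopf algebra `H`:
`(F⊗1)·(Δ⊗id)(F) = (1⊗F)·(id⊗Δ)(F)` and `(ε⊗id)(F) = 1 = (id⊗ε)(F)`. -/
def IsCocycle (F Finv : H ⊗[k] H) : Prop :=
  F * Finv = 1 ∧ Finv * F = 1 ∧
  (F ⊗ₜ[k] (1 : H)) * (TensorProduct.map Coalgebra.comul LinearMap.id F) =
    (TensorProduct.assoc k H H H).symm
      (((1 : H) ⊗ₜ[k] F) * (TensorProduct.map LinearMap.id Coalgebra.comul F)) ∧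
  TensorProduct.map Coalgebra.counit LinearMap.id F = 1 ∧
  TensorProduct.map LinearMap.id Coalgebra.counit F = 1

/-- A (left) module-algebra structure of a Hopf algebra `H` on an algebra `A`:
`A` is an algebra object in the category of `H`-modules. -/
structure ModuleAlgebra (A : Type) [Ring A] [Algebra k A] where
  act : H →ₗ[k] Module.End k A
  act_one : act 1 = 1
  act_mul : ∀ g h : H, act (g * h) = act g * act h
  act_algebra_unit : ∀ h : H, act h (1 : A) = (Coalgebra.counit h : k) • (1 : A)
  act_algebra_mul : ∀ (h : H) (a b : A),
    act h (a * b) = LinearMap.mul' k A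
      ((TensorProduct.homTensorHomMap (RingHom.id k) A A A A
        (TensorProduct.map act act (Coalgebra.comul h))) (a ⊗ₜ[k] b))

variable {k H}

/-- The operator on `A ⊗ B` obtained by letting an element `x ∈ H ⊗ H` act
legwise through the actions `actA`, `actB`. -/
def legAct {A B : Type} [AddCommGroup A] [Module k A] [AddCommGroup B] [Module k B]
    (actA : H →ₗ[k] Module.End k A) (actB : H →ₗ[k] Module.End k B) (x : H ⊗[k] H) :
    A ⊗[k] B →ₗ[k] A ⊗[k] B :=
  TensorProduct.homTensorHomMap (RingHom.id k) A B A B (TensorProduct.map actA actB x)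

/-- The twisted product `m_F = m ∘ (F⁻¹ ▷ −)` on `A`. -/
def twistedMul {A : Type} [Ring A] [Algebra k A] (ma : ModuleAlgebra k H A)
    (Finv : H ⊗[k] H) : A ⊗[k] A →ₗ[k] A :=
  LinearMap.mul' k A ∘ₗ legAct ma.act ma.act Finv

/-- The twisted coproduct `Δ_F(h) = F·Δ(h)·F⁻¹`. -/
def twistedComul (F Finv : H ⊗[k] H) : H →ₗ[k] H ⊗[k] H :=
  LinearMap.mulLeft k F ∘ₗ LinearMap.mulRight k Finv ∘ₗ Coalgebra.comul


/-- A representation of a `k`-algebra `A` on a `k`-vector space `V`. -/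
structure AlgRep (A : Type) [Ring A] [Algebra k A] (V : Type) [AddCommGroup V] [Module k V] where
  ρ : A →ₗ[k] Module.End k V
  ρ_one : ρ 1 = 1
  ρ_mul : ∀ a b : A, ρ (a * b) = ρ a * ρ b

/-- `V` is an `(H,A)`-module: the `A`-action is a morphism of `H`-modules, i.e.
`h ▷ (a ▷_A v) = (h₍₁₎ ▷ a) ▷_A (h₍₂₎ ▷ v)`. -/
def IsHAModule {A V : Type} [Ring A] [Algebra k A] [AddCommGroup V] [Module k V]
    (ma : ModuleAlgebra k H A) (ρA : AlgRep (k := k) A V) (ρH : AlgRep (k := k) H V) : Prop :=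
  ∀ (h : H) (a : A) (v : V),
    ρH.ρ h (ρA.ρ a v) =
      TensorProduct.lift ρA.ρ (legAct ma.act ρH.ρ (Coalgebra.comul h) (a ⊗ₜ[k] v))

/-- The Giaquinto–Zhang twisted action `▷_F = ▷_A ∘ (F⁻¹ ▷ −)` of `A_F` on `V`. -/
def twistedAct {A V : Type} [Ring A] [Algebra k A] [AddCommGroup V] [Module k V]
    (ma : ModuleAlgebra k H A) (ρA : AlgRep (k := k) A V) (ρH : AlgRep (k := k) H V)
    (Finv : H ⊗[k] H) : A →ₗ[k] Module.End k V :=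
  TensorProduct.curry (TensorProduct.lift ρA.ρ ∘ₗ legAct ma.act ρH.ρ Finv)

/-- Generic smash-product multiplication on `A ⊗ H`, for a multiplication `μA` on `A`,
comultiplication `δ` and multiplication `μH` on `H`, and action `actUn : H ⊗ A → A`:
`(a # h)(b # g) = a·(h₍₁₎ ▷ b) # h₍₂₎·g`. -/
def smashMulMap {A : Type} [AddCommGroup A] [Module k A]
    (μA : A ⊗[k] A →ₗ[k] A) (δ : H →ₗ[k] H ⊗[k] H) (μH : H ⊗[k] H →ₗ[k] H)
    (actUn : H ⊗[k] A →ₗ[k] A) :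
    (A ⊗[k] H) ⊗[k] (A ⊗[k] H) →ₗ[k] A ⊗[k] H :=
  TensorProduct.map μA LinearMap.id
    ∘ₗ (TensorProduct.assoc k A A H).symm.toLinearMap
    ∘ₗ (TensorProduct.map LinearMap.id
          ((TensorProduct.map actUn μH)
            ∘ₗ (TensorProduct.tensorTensorTensorComm k H H A H).toLinearMap))
    ∘ₗ (TensorProduct.assoc k A (H ⊗[k] H) (A ⊗[k] H)).toLinearMap
    ∘ₗ TensorProduct.map (TensorProduct.map LinearMap.id δ) LinearMap.id

section LegAct

variable {M N : Type} [AddCommGroup M] [Module k M] [AddCommGroup N] [Module k N]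

@[simp] lemma legAct_tmul (actM : H →ₗ[k] Module.End k M) (actN : H →ₗ[k] Module.End k N)
    (g h : H) : legAct actM actN (g ⊗ₜ[k] h) = TensorProduct.map (actM g) (actN h) := by
  simp [legAct]

def legActHom (ρ : H →ₐ[k] Module.End k M) (σ : H →ₐ[k] Module.End k N) :
    H ⊗[k] H →ₐ[k] Module.End k (M ⊗[k] N) :=
  Module.endTensorEndAlgHom.comp (Algebra.TensorProduct.map ρ σ)

lemma legAct_eq_legActHom (ρ : H →ₐ[k] Module.End k M) (σ : H →ₐ[k] Module.End k N)
    (x : H ⊗[k] H) : legAct ρ.toLinearMap σ.toLinearMap x = legActHom ρ σ x := by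
  induction x using TensorProduct.induction_on with
  | zero => simp [legAct]
  | add x y hx hy => simp only [legAct, map_add] at hx hy ⊢; rw [hx, hy]
  | tmul g h => ext; rfl

lemma bijective_legAct_of_isUnit (ρ : H →ₐ[k] Module.End k M) (σ : H →ₐ[k] Module.End k N)
    {x : H ⊗[k] H} (hx : IsUnit x) : Function.Bijective (legAct ρ.toLinearMap σ.toLinearMap x) := by
  rw [legAct_eq_legActHom]
  exact (Module.End.isUnit_iff _).mp (hx.map _)

end LegAct

lemma smashMulMap_tmul_tmul {A : Type} [AddCommGroup A] [Module k A]
    (μA : A ⊗[k] A →ₗ[k] A) (δ : H →ₗ[k] H ⊗[k] H) (actUn : H ⊗[k] A →ₗ[k] A)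
    (a b : A) (h g : H) :
    smashMulMap μA δ (LinearMap.mul' k H) actUn ((a ⊗ₜ[k] h) ⊗ₜ[k] (b ⊗ₜ[k] g)) =
      TensorProduct.map
        (μA ∘ₗ TensorProduct.mk k A A a ∘ₗ actUn ∘ₗ (TensorProduct.mk k H A).flip b)
        (LinearMap.mulRight k g) (δ h) := by
  simp only [smashMulMap, LinearMap.coe_comp, Function.comp_apply, LinearEquiv.coe_coe,
    TensorProduct.map_tmul, LinearMap.id_coe, id_eq, TensorProduct.assoc_tmul]
  induction δ h using TensorProduct.induction_on with
  | zero => simp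
  | add s s' hs hs' =>
    simp only [TensorProduct.tmul_add, TensorProduct.add_tmul, map_add, hs, hs']
  | tmul x y => simp

section Cocycle

variable {F Finv : H ⊗[k] H}

open Algebra.TensorProduct in
lemma IsCocycle.inv_cocycle (hF : IsCocycle k H F Finv) :
    map (Bialgebra.comulAlgHom k H) (AlgHom.id k H) Finv * (Finv ⊗ₜ[k] (1 : H)) =
      (Algebra.TensorProduct.assoc k k k H H H).symm
        (map (AlgHom.id k H) (Bialgebra.comulAlgHom k H) Finv * ((1 : H) ⊗ₜ[k] Finv)) := by
  obtain ⟨hFFinv, hFinvF, hcocycle, -, -⟩ := hF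
  set Δl := map (Bialgebra.comulAlgHom k H) (AlgHom.id k H)
  set Δr := map (AlgHom.id k H) (Bialgebra.comulAlgHom k H)
  set σ := (Algebra.TensorProduct.assoc k k k H H H).symm
  have hcocycle' : includeLeft (S := k) F * Δl F = σ (includeRight F * Δr F) := hcocycle
  -- both sides are inverse to the two sides of the cocycle identity for `F`
  refine left_inv_eq_right_inv (a := includeLeft (S := k) F * Δl F) ?_ ?_
  · change Δl Finv * includeLeft (S := k) Finv * (includeLeft F * Δl F) = 1
    rw [mul_assoc, ← mul_assoc (includeLeft Finv), ← map_mul, hFinvF, map_one, one_mul,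
      ← map_mul, hFinvF, map_one]
  · change _ * σ (Δr Finv * includeRight Finv) = 1
    rw [hcocycle', ← map_mul, mul_assoc, ← mul_assoc (Δr F), ← map_mul, hFFinv, map_one,
      one_mul, ← map_mul, hFFinv, map_one, map_one]

lemma IsCocycle.counit_inv (hF : IsCocycle k H F Finv) :
    TensorProduct.map Coalgebra.counit LinearMap.id Finv = (1 : k ⊗[k] H) := by
  obtain ⟨hFFinv, -, -, hcounit, -⟩ := hF
  have hcounit' :
      Algebra.TensorProduct.map (Bialgebra.counitAlgHom k H) (AlgHom.id k H) F = 1 := hcounit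
  change Algebra.TensorProduct.map (Bialgebra.counitAlgHom k H) (AlgHom.id k H) Finv = 1
  calc _ = Algebra.TensorProduct.map (Bialgebra.counitAlgHom k H) (AlgHom.id k H) (F * Finv) := by
        rw [map_mul, hcounit', one_mul]
    _ = 1 := by rw [hFFinv, map_one]

end Cocycle

namespace ModuleAlgebra

variable {A : Type} [Ring A] [Algebra k A] (ma : ModuleAlgebra k H A)

def actHom : H →ₐ[k] Module.End k A := AlgHom.ofLinearMap ma.act ma.act_one ma.act_mul

lemma legAct_act_mul_eq_legActHom (x : H ⊗[k] H) :
    legAct ma.act (LinearMap.mul k H) x = legActHom ma.actHom (Algebra.lmul k H) x :=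
  legAct_eq_legActHom ma.actHom (Algebra.lmul k H) x

lemma legAct_act_act_eq_legActHom (x : H ⊗[k] H) :
    legAct ma.act ma.act x = legActHom ma.actHom ma.actHom x :=
  legAct_eq_legActHom ma.actHom ma.actHom x

lemma legAct_act_mul_one_tmul_one (x : H ⊗[k] H) :
    legAct ma.act (LinearMap.mul k H) x ((1 : A) ⊗ₜ[k] (1 : H)) =
      TensorProduct.map (Algebra.linearMap k A) LinearMap.id
        (TensorProduct.map Coalgebra.counit LinearMap.id x) := by
  induction x using TensorProduct.induction_on with
  | zero => simp [legAct]
  | add x x' hx hx' =>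
    rw [legAct_act_mul_eq_legActHom] at hx hx' ⊢
    rw [map_add, LinearMap.add_apply, hx, hx', map_add, map_add]
  | tmul g h => simp [ma.act_algebra_unit, Algebra.algebraMap_eq_smul_one]

def smashEval (a b : A) (g : H) : (H ⊗[k] H) ⊗[k] H →ₗ[k] A ⊗[k] H :=
  TensorProduct.map (LinearMap.mul' k A ∘ₗ TensorProduct.map (ma.act.flip a) (ma.act.flip b))
    (LinearMap.mulRight k g)

@[simp] lemma smashEval_tmul (a b : A) (g u v w : H) :
    ma.smashEval a b g ((u ⊗ₜ[k] v) ⊗ₜ[k] w) = (ma.act u a * ma.act v b) ⊗ₜ[k] (w * g) := by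
  simp [smashEval]

lemma smashEval_act_act_mul (a b : A) (g x y z : H) (t : (H ⊗[k] H) ⊗[k] H) :
    ma.smashEval (ma.act x a) (ma.act y b) (z * g) t =
      ma.smashEval a b g (t * ((x ⊗ₜ[k] y) ⊗ₜ[k] z)) := by
  induction t using TensorProduct.induction_on with
  | zero => simp
  | add t t' ht ht' => rw [map_add, ht, ht', add_mul, map_add]
  | tmul uv w =>
    induction uv using TensorProduct.induction_on with
    | zero => simp
    | add uv uv' h h' => simp only [TensorProduct.add_tmul, map_add, h, h', add_mul]
    | tmul u v => simp [ma.act_mul, mul_assoc]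

lemma twistedMul_tmul (r : H ⊗[k] H) (a b : A) (g : H) :
    twistedMul ma r (a ⊗ₜ[k] b) ⊗ₜ[k] g = ma.smashEval a b g (r ⊗ₜ[k] (1 : H)) := by
  induction r using TensorProduct.induction_on with
  | zero => simp [twistedMul, legAct]
  | add r r' hr hr' =>
    simp only [twistedMul, LinearMap.comp_apply, legAct_act_act_eq_legActHom, map_add,
      LinearMap.add_apply, TensorProduct.add_tmul] at hr hr' ⊢
    rw [hr, hr']
  | tmul x y => simp [twistedMul]

lemma twistedMul_one : twistedMul ma 1 = LinearMap.mul' k A := by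
  rw [twistedMul, legAct_act_act_eq_legActHom, map_one, Module.End.one_eq_id, LinearMap.comp_id]

lemma legAct_smashEval (a b : A) (g : H) (x : H ⊗[k] H) (t : (H ⊗[k] H) ⊗[k] H) :
    legAct ma.act (LinearMap.mul k H) x (ma.smashEval a b g t) =
      ma.smashEval a b g
        (Algebra.TensorProduct.map (Bialgebra.comulAlgHom k H) (AlgHom.id k H) x * t) := by
  induction x using TensorProduct.induction_on with
  | zero => simp [legAct]
  | add x x' hx hx' =>
    rw [legAct_act_mul_eq_legActHom] at hx hx' ⊢
    rw [map_add, LinearMap.add_apply, hx, hx', map_add, add_mul, map_add]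
  | tmul x y =>
    induction t using TensorProduct.induction_on with
    | zero => simp
    | add t t' ht ht' => rw [map_add, map_add, ht, ht', mul_add, map_add]
    | tmul uv w =>
      induction uv using TensorProduct.induction_on with
      | zero => simp
      | add uv uv' h h' => simp only [TensorProduct.add_tmul, map_add, h, h', mul_add]
      | tmul u v =>
        have hcomul : ma.act x (ma.act u a * ma.act v b) ⊗ₜ[k] (y * (w * g)) =
            ma.smashEval (ma.act u a) (ma.act v b) ((y * w) * g)
              (Coalgebra.comul x ⊗ₜ[k] (1 : H)) := by
          rw [ma.act_algebra_mul, mul_assoc, ← twistedMul_tmul]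
          rfl
        simpa [ma.smashEval_act_act_mul] using hcomul

lemma smashMulMap_twistedMul_tmul_tmul (r : H ⊗[k] H) (δ : H →ₗ[k] H ⊗[k] H) (a b : A)
    (h g : H) :
    smashMulMap (twistedMul ma r) δ (LinearMap.mul' k H) (TensorProduct.lift ma.act)
        ((a ⊗ₜ[k] h) ⊗ₜ[k] (b ⊗ₜ[k] g)) =
      ma.smashEval a b g ((r ⊗ₜ[k] (1 : H)) *
        (Algebra.TensorProduct.assoc k k k H H H).symm ((1 : H) ⊗ₜ[k] δ h)) := by
  rw [smashMulMap_tmul_tmul]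
  induction δ h using TensorProduct.induction_on with
  | zero => simp
  | add s s' hs hs' => simp only [map_add, hs, hs', TensorProduct.tmul_add, mul_add]
  | tmul x y =>
    have hshift := ma.smashEval_act_act_mul a b g 1 x y (r ⊗ₜ[k] (1 : H))
    simp only [ma.act_one, Module.End.one_apply] at hshift
    simp [twistedMul_tmul, hshift]

lemma smashMulMap_mul'_tmul_tmul (δ : H →ₗ[k] H ⊗[k] H) (a b : A) (h g : H) :
    smashMulMap (LinearMap.mul' k A) δ (LinearMap.mul' k H) (TensorProduct.lift ma.act)
        ((a ⊗ₜ[k] h) ⊗ₜ[k] (b ⊗ₜ[k] g)) =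
      ma.smashEval a b g ((Algebra.TensorProduct.assoc k k k H H H).symm ((1 : H) ⊗ₜ[k] δ h)) := by
  simpa [twistedMul_one, ← Algebra.TensorProduct.one_def] using
    ma.smashMulMap_twistedMul_tmul_tmul 1 δ a b h g

lemma smashMulMap_legAct_tmul_legAct (u v : H ⊗[k] H) (a b : A) (h g : H) :
    smashMulMap (LinearMap.mul' k A) Coalgebra.comul (LinearMap.mul' k H)
        (TensorProduct.lift ma.act)
        (legAct ma.act (LinearMap.mul k H) u (a ⊗ₜ[k] h) ⊗ₜ[k]
          legAct ma.act (LinearMap.mul k H) v (b ⊗ₜ[k] g)) =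
      ma.smashEval a b g ((Algebra.TensorProduct.assoc k k k H H H).symm
        (Algebra.TensorProduct.map (AlgHom.id k H) (Bialgebra.comulAlgHom k H) u *
          ((1 : H) ⊗ₜ[k] (Coalgebra.comul h * v)))) := by
  induction u using TensorProduct.induction_on with
  | zero => simp [legAct]
  | add u u' hu hu' =>
    simp only [legAct_act_mul_eq_legActHom, map_add, LinearMap.add_apply, TensorProduct.add_tmul,
      add_mul, map_add] at hu hu' ⊢
    rw [hu, hu']
  | tmul x y =>
    induction v using TensorProduct.induction_on with
    | zero => simp [legAct]
    | add v v' hv hv' =>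
      simp only [legAct_act_mul_eq_legActHom, map_add, LinearMap.add_apply, TensorProduct.tmul_add,
        mul_add, map_add] at hv hv' ⊢
      rw [hv, hv']
    | tmul z w =>
      simp only [legAct_tmul, TensorProduct.map_tmul, LinearMap.mul_apply',
        smashMulMap_mul'_tmul_tmul]
      rw [smashEval_act_act_mul]
      congr 1
      rw [← Algebra.TensorProduct.assoc_symm_tmul (R := k) (S := k) (T := k), ← map_mul]
      simp [Bialgebra.comul_mul, mul_assoc]

lemma legAct_smashMulMap_twisted_tmul_tmul {F Finv : H ⊗[k] H} (hF : IsCocycle k H F Finv)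
    (a b : A) (h g : H) :
    legAct ma.act (LinearMap.mul k H) Finv
        (smashMulMap (twistedMul ma Finv) (twistedComul F Finv) (LinearMap.mul' k H)
          (TensorProduct.lift ma.act) ((a ⊗ₜ[k] h) ⊗ₜ[k] (b ⊗ₜ[k] g))) =
      smashMulMap (LinearMap.mul' k A) Coalgebra.comul (LinearMap.mul' k H)
        (TensorProduct.lift ma.act)
        (legAct ma.act (LinearMap.mul k H) Finv (a ⊗ₜ[k] h) ⊗ₜ[k]
          legAct ma.act (LinearMap.mul k H) Finv (b ⊗ₜ[k] g)) := by
  have htwistedComul : twistedComul F Finv h = F * (Coalgebra.comul h * Finv) := rfl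
  rw [smashMulMap_twistedMul_tmul_tmul, legAct_smashEval, smashMulMap_legAct_tmul_legAct,
    htwistedComul, ← mul_assoc, hF.inv_cocycle, ← map_mul, mul_assoc,
    Algebra.TensorProduct.tmul_mul_tmul, one_mul, ← mul_assoc Finv, hF.2.1, one_mul]

lemma legAct_smashMulMap_twisted {F Finv : H ⊗[k] H} (hF : IsCocycle k H F Finv)
    (x y : A ⊗[k] H) :
    legAct ma.act (LinearMap.mul k H) Finv
        (smashMulMap (twistedMul ma Finv) (twistedComul F Finv) (LinearMap.mul' k H)
          (TensorProduct.lift ma.act) (x ⊗ₜ[k] y)) =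
      smashMulMap (LinearMap.mul' k A) Coalgebra.comul (LinearMap.mul' k H)
        (TensorProduct.lift ma.act)
        (legAct ma.act (LinearMap.mul k H) Finv x ⊗ₜ[k]
          legAct ma.act (LinearMap.mul k H) Finv y) := by
  have hcomp : legAct ma.act (LinearMap.mul k H) Finv ∘ₗ
        smashMulMap (twistedMul ma Finv) (twistedComul F Finv) (LinearMap.mul' k H)
          (TensorProduct.lift ma.act) =
      smashMulMap (LinearMap.mul' k A) Coalgebra.comul (LinearMap.mul' k H)
          (TensorProduct.lift ma.act) ∘ₗ
        TensorProduct.map (legAct ma.act (LinearMap.mul k H) Finv)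
          (legAct ma.act (LinearMap.mul k H) Finv) := by
    ext a h b g
    exact ma.legAct_smashMulMap_twisted_tmul_tmul hF a b h g
  exact LinearMap.congr_fun hcomp (x ⊗ₜ[k] y)

end ModuleAlgebra

theorem twisted_smash_iso {A : Type} [Ring A] [Algebra k A]
    (ma : ModuleAlgebra k H A) (F Finv : H ⊗[k] H) (hF : IsCocycle k H F Finv) :
    Function.Bijective (legAct ma.act (LinearMap.mul k H) Finv) ∧
    (∀ x y : A ⊗[k] H,
      legAct ma.act (LinearMap.mul k H) Finv
          (smashMulMap (twistedMul ma Finv) (twistedComul F Finv) (LinearMap.mul' k H)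
            (TensorProduct.lift ma.act) (x ⊗ₜ[k] y)) =
        smashMulMap (LinearMap.mul' k A) Coalgebra.comul (LinearMap.mul' k H)
          (TensorProduct.lift ma.act)
          (legAct ma.act (LinearMap.mul k H) Finv x ⊗ₜ[k]
            legAct ma.act (LinearMap.mul k H) Finv y)) ∧
    legAct ma.act (LinearMap.mul k H) Finv ((1 : A) ⊗ₜ[k] (1 : H)) =
      (1 : A) ⊗ₜ[k] (1 : H) := by
  have hFinv : IsUnit Finv := ⟨⟨Finv, F, hF.2.1, hF.1⟩, rfl⟩
  refine ⟨bijective_legAct_of_isUnit ma.actHom (Algebra.lmul k H) hFinv,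
    ma.legAct_smashMulMap_twisted hF, ?_⟩
  rw [ma.legAct_act_mul_one_tmul_one, hF.counit_inv, Algebra.TensorProduct.one_def]
  simp

end
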